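/- arXiv:1902.06200 — 2 statements merged into one kernel-verified Lean document; each statement's English description precedes it below -/
import Mathlib

section
/- Let X be a pseudocompact space with a quasi κ-metric ρ bounded by 1, and let βX be its Čech–Stone compactification. For each open W ⊆ βX, let f_W : X → ℝ be f_W(x) = ρ(x, cl_X(W ∩ X)) and let f̃_W : βX → ℝ be its continuous extension; define d(y, cl W) = f̃_W(y). Then d satisfies condition K4*: for every increasing sequence {cl W_n} of regularly closed subsets of βX with W = ⋃_n W_n, d(y, cl W) = inf_n d(y, cl W_n) for all y ∈ βX. -/
/-!
On the dense image of `X` in `βX` the identity is axiom K4 of `ρ`, and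
`d(·, cl W) ≤ d(·, cl Wₙ)` extends from `X` by continuity. The infimum of the `d(·, cl Wₙ)` is
only upper semicontinuous, but a point `y` with `d(y, cl W) < c ≤ infₙ d(y, cl Wₙ)` lies in the
common zero set of the countably many continuous functions `d(·, cl W) - d(y, cl W)` and
`c - d(·, cl Wₙ)`, and no point of `X` does, by K4. This is impossible for pseudocompact `X`:
the sum `∑ 2⁻ⁿ min (max uₙ 0) 1` of such functions would be positive on `X` and vanish at `y`,
so its reciprocal would be unbounded on `X`.
-/

/-- A set is regularly closed if it equals the closure of its interior. -/
def RegClosed {X : Type*} [TopologicalSpace X] (C : Set X) : Prop :=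
  C = closure (interior C)

/-- A set is regularly open if it equals the interior of its closure. -/
def RegOpen {X : Type*} [TopologicalSpace X] (U : Set X) : Prop :=
  U = interior (closure U)

/-- A quasi κ-metric on `X`: a nonnegative function of a point and a regularly
closed set satisfying axioms K1*, K2, K3 and K4. -/
structure IsQuasiKappaMetric {X : Type*} [TopologicalSpace X] (ρ : X → Set X → ℝ) : Prop where
  nonneg : ∀ x C, RegClosed C → 0 ≤ ρ x C
  k1star : ∀ C : Set X, RegClosed C → ∃ V : Set X, IsOpen V ∧ V ⊆ Cᶜ ∧
    Cᶜ ⊆ closure V ∧ ∀ x, 0 < ρ x C ↔ x ∈ V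
  k2 : ∀ x (C C' : Set X), RegClosed C → RegClosed C' → C ⊆ C' → ρ x C' ≤ ρ x C
  k3 : ∀ C : Set X, RegClosed C → Continuous (fun x => ρ x C)
  k4 : ∀ S : Set (Set X), S.Nonempty → (∀ C ∈ S, RegClosed C) → IsChain (· ⊆ ·) S →
    ∀ x, ρ x (closure (⋃₀ S)) = sInf {r : ℝ | ∃ C ∈ S, r = ρ x C}

/-- A space is pseudocompact if every continuous real-valued function on it is bounded. -/
def Pseudocompact (X : Type*) [TopologicalSpace X] : Prop :=
  ∀ f : X → ℝ, Continuous f → ∃ M : ℝ, ∀ x, |f x| ≤ M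

open Set

lemma regClosed_closure_of_isOpen {X : Type*} [TopologicalSpace X] {U : Set X}
    (hU : IsOpen U) : RegClosed (closure U) :=
  (closure_mono hU.subset_interior_closure).antisymm isClosed_closure.closure_interior_subset

lemma closure_accumulate_of_monotone_closure {Y : Type*} [TopologicalSpace Y] {W : ℕ → Set Y}
    (hW : Monotone fun n => closure (W n)) (n : ℕ) :
    closure (accumulate W n) = closure (W n) := by
  refine (closure_minimal ?_ isClosed_closure).antisymm (closure_mono subset_accumulate)
  exact iUnion₂_subset fun k hk => subset_closure.trans (hW hk)

lemma closure_iUnion_closure_eq {Y ι : Type*} [TopologicalSpace Y] (A : ι → Set Y) :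
    closure (⋃ i, closure (A i)) = closure (⋃ i, A i) :=
  (closure_minimal (iUnion_subset fun i => closure_mono (subset_iUnion A i))
    isClosed_closure).antisymm (closure_mono (iUnion_mono fun _ => subset_closure))

lemma IsQuasiKappaMetric.apply_closure_iUnion {X : Type*} [TopologicalSpace X]
    {ρ : X → Set X → ℝ} (hρ : IsQuasiKappaMetric ρ) {U : ℕ → Set X}
    (hU : ∀ n, IsOpen (U n)) (hmono : Monotone U) (x : X) :
    ρ x (closure (⋃ n, U n)) = ⨅ n, ρ x (closure (U n)) := by
  have hC : Monotone fun n => closure (U n) := fun _ _ h => closure_mono (hmono h)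
  have h := hρ.k4 (range fun n => closure (U n)) (range_nonempty _)
    (forall_mem_range.2 fun n => regClosed_closure_of_isOpen (hU n)) hC.isChain_range x
  rw [sUnion_range, closure_iUnion_closure_eq] at h
  rw [h, iInf]
  congr 1
  ext r
  simp [eq_comm]

namespace Pseudocompact

variable {X Y : Type*} [TopologicalSpace X] [TopologicalSpace Y] (hX : Pseudocompact X)
  {g : X → Y} (hgc : Continuous g) (hg : DenseRange g)
include hX hgc hg

lemma pos_of_denseRange {h : Y → ℝ} (hh : Continuous h) (hpos : ∀ x, 0 < h (g x)) (y : Y) :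
    0 < h y := by
  obtain ⟨M, hM⟩ := hX (fun x => (h (g x))⁻¹) ((hh.comp hgc).inv₀ fun x => (hpos x).ne')
  have hlow : ∀ x, M⁻¹ ≤ h (g x) := fun x =>
    inv_le_of_inv_le₀ (hpos x) ((le_abs_self _).trans (hM x))
  have : Nonempty Y := ⟨y⟩
  obtain ⟨x₀⟩ := hg.nonempty
  have hM : 0 < M := (inv_pos.2 (hpos x₀)).trans_le ((le_abs_self _).trans (hM x₀))
  exact (inv_pos.2 hM).trans_le (hg.induction_on y (isClosed_le continuous_const hh) hlow)

lemma exists_forall_nonpos_of_denseRange {ι : Type*} [Encodable ι] {u : ι → Y → ℝ}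
    (hu : ∀ i, Continuous (u i)) {y : Y} (hy : ∀ i, u i y ≤ 0) :
    ∃ x, ∀ i, u i (g x) ≤ 0 := by
  by_contra! hne
  set v : ι → Y → ℝ := fun i z => (1 / 2) ^ Encodable.encode i * min (max (u i z) 0) 1
  have hv_nonneg : ∀ i z, 0 ≤ v i z := fun i z => by positivity
  have hv_le : ∀ i z, ‖v i z‖ ≤ (1 / 2) ^ Encodable.encode i := fun i z => by
    rw [Real.norm_eq_abs, abs_of_nonneg (hv_nonneg i z)]
    exact mul_le_of_le_one_right (by positivity) (min_le_right _ _)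
  have hv_cont : Continuous fun z => ∑' i, v i z :=
    continuous_tsum (fun i => by fun_prop) summable_geometric_two_encode hv_le
  have hv_pos : ∀ x, 0 < ∑' i, v i (g x) := fun x => by
    obtain ⟨i, hi⟩ := hne x
    exact (summable_geometric_two_encode.of_norm_bounded fun i => hv_le i (g x)).tsum_pos
      (fun i => hv_nonneg i _) i (by positivity)
  have hv_y : ∑' i, v i y = 0 := by simp [v, max_eq_right (hy _)]
  exact (pos_of_denseRange hX hgc hg hv_cont hv_pos y).ne' hv_y

lemma eq_iInf_of_denseRange {f : Y → ℝ} {φ : ℕ → Y → ℝ} (hf : Continuous f)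
    (hφ : ∀ n, Continuous (φ n)) (hle : ∀ n x, f (g x) ≤ φ n (g x))
    (heq : ∀ x, f (g x) = ⨅ n, φ n (g x)) (y : Y) : f y = ⨅ n, φ n y := by
  have hle' : ∀ n z, f z ≤ φ n z := fun n z =>
    hg.induction_on z (isClosed_le hf (hφ n)) (hle n)
  refine le_antisymm (le_ciInf fun n => hle' n y) (not_lt.1 fun hlt => ?_)
  set c := ⨅ n, φ n y
  have hbdd : BddBelow (range fun n => φ n y) := ⟨f y, forall_mem_range.2 fun n => hle' n y⟩
  let u : Option ℕ → Y → ℝ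
    | none => fun z => f z - f y
    | some n => fun z => c - φ n z
  have hu : ∀ i, Continuous (u i)
    | none => hf.sub continuous_const
    | some n => continuous_const.sub (hφ n)
  have hy : ∀ i, u i y ≤ 0
    | none => (sub_self _).le
    | some n => sub_nonpos.2 (ciInf_le hbdd n)
  obtain ⟨x, hx⟩ := exists_forall_nonpos_of_denseRange hX hgc hg hu hy
  have hfx : f (g x) ≤ f y := sub_nonpos.1 (hx none)
  have hcx : c ≤ f (g x) := heq x ▸ le_ciInf fun n => sub_nonpos.1 (hx (some n))
  linarith

end Pseudocompact

theorem stmt10_general {X : Type*} [TopologicalSpace X]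
    (hpc : Pseudocompact X)
    (ρ : X → Set X → ℝ) (hρ : IsQuasiKappaMetric ρ)
    (d : StoneCech X → Set (StoneCech X) → ℝ)
    (hd_cont : ∀ W : Set (StoneCech X), IsOpen W →
      Continuous (fun y => d y (closure W)))
    (hd_ext : ∀ W : Set (StoneCech X), IsOpen W → ∀ x : X,
      d (stoneCechUnit x) (closure W) = ρ x (closure (stoneCechUnit ⁻¹' W))) :
    ∀ W : ℕ → Set (StoneCech X), (∀ n, IsOpen (W n)) →
      Monotone (fun n => closure (W n)) →
      ∀ y : StoneCech X, d y (closure (⋃ n, W n)) = ⨅ n, d y (closure (W n)) := by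
  intro W hW hmono y
  -- K4 on `X` needs increasing preimages, so replace `W` by the increasing `accumulate W`,
  -- which has the same closures.
  have hV : ∀ n, IsOpen (accumulate W n) := fun n => isOpen_biUnion fun k _ => hW k
  have hVU : IsOpen (⋃ n, accumulate W n) := isOpen_iUnion hV
  rw [← iUnion_accumulate]
  simp only [← closure_accumulate_of_monotone_closure hmono]
  refine hpc.eq_iInf_of_denseRange continuous_stoneCechUnit denseRange_stoneCechUnit
    (hd_cont _ hVU) (fun n => hd_cont _ (hV n)) (fun n x => ?_) (fun x => ?_) y
  · rw [hd_ext _ hVU, hd_ext _ (hV n)]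
    exact hρ.k2 x _ _ (regClosed_closure_of_isOpen ((hV n).preimage continuous_stoneCechUnit))
      (regClosed_closure_of_isOpen (hVU.preimage continuous_stoneCechUnit))
      (closure_mono (preimage_mono (subset_iUnion _ n)))
  · simp only [hd_ext _ hVU, hd_ext _ (hV _), preimage_iUnion]
    exact hρ.apply_closure_iUnion (fun n => (hV n).preimage continuous_stoneCechUnit)
      (fun _ _ h => preimage_mono (monotone_accumulate h)) x

theorem stmt10 {X : Type*} [TopologicalSpace X]
    (hpc : Pseudocompact X)
    (ρ : X → Set X → ℝ) (hρ : IsQuasiKappaMetric ρ)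
    (hnormed : ∀ x C, RegClosed C → ρ x C ≤ 1)
    (d : StoneCech X → Set (StoneCech X) → ℝ)
    (hd_cont : ∀ W : Set (StoneCech X), IsOpen W →
      Continuous (fun y => d y (closure W)))
    (hd_ext : ∀ W : Set (StoneCech X), IsOpen W → ∀ x : X,
      d (stoneCechUnit x) (closure W) = ρ x (closure (stoneCechUnit ⁻¹' W))) :
    ∀ W : ℕ → Set (StoneCech X), (∀ n, IsOpen (W n)) →
      Monotone (fun n => closure (W n)) →
      ∀ y : StoneCech X, d y (closure (⋃ n, W n)) = ⨅ n, d y (closure (W n)) :=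
  stmt10_general hpc ρ hρ d hd_cont hd_ext
end

section
/- Let f : X → Y be a perfect irreducible continuous surjection and U ⊆ X open. Then f(cl U) = cl(U_♯), where U_♯ = {y ∈ Y : f⁻¹(y) ⊆ U} = Y \ f(X \ U); in particular, the image under f of a regularly closed subset of X is regularly closed in Y, and U_♯ is nonempty and open whenever U is nonempty. -/
/-!
Write `U♯ = kernImage f U = {y | f⁻¹(y) ⊆ U}`. For a closed map `U♯` is open when `U` is, and
irreducibility says exactly that `U♯` is nonempty for every nonempty open `U`. If `x ∈ cl U` and
`W ∋ f x` is open, then `(U ∩ f⁻¹ W)♯` is nonempty and lies in `U♯ ∩ W`, so `f x ∈ cl U♯`; the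
converse inclusion holds because `f '' cl U` is closed and contains `U♯` by surjectivity. Hence the
image of `cl (int C)` is the closure of the open set `(int C)♯`, a regularly closed set.
-/

open Set

section

variable {X Y : Type*}

def IsIrreducibleMap [TopologicalSpace X] (f : X → Y) : Prop :=
  ∀ F : Set X, IsClosed F → f '' F = univ → F = univ

theorem IsOpen.regClosed_closure [TopologicalSpace X] {K : Set X} (hK : IsOpen K) :
    RegClosed (closure K) :=
  (closure_mono hK.subset_interior_closure).antisymm isClosed_closure.closure_interior_subset

theorem Function.Surjective.kernImage_subset_image {f : X → Y} (hf : Function.Surjective f)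
    (s : Set X) : kernImage f s ⊆ f '' s := fun y hy ↦
  let ⟨x, hx⟩ := hf y
  ⟨x, hy hx, hx⟩

namespace IsIrreducibleMap

variable [TopologicalSpace X] {f : X → Y}

theorem kernImage_nonempty (hirr : IsIrreducibleMap f) {U : Set X} (hU : IsOpen U)
    (hne : U.Nonempty) : (kernImage f U).Nonempty := by
  rw [nonempty_iff_ne_empty, kernImage_eq_compl, Ne, compl_empty_iff]
  intro hcover
  exact hne.ne_empty (compl_univ_iff.mp (hirr _ hU.isClosed_compl hcover))

variable [TopologicalSpace Y]

theorem image_closure_eq_closure_kernImage (hirr : IsIrreducibleMap f) (hcont : Continuous f)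
    (hclosed : IsClosedMap f) (hsurj : Function.Surjective f) {U : Set X} (hU : IsOpen U) :
    f '' closure U = closure (kernImage f U) := by
  refine Subset.antisymm ?_ <| closure_minimal
    ((hsurj.kernImage_subset_image U).trans (image_mono subset_closure))
    (hclosed _ isClosed_closure)
  rintro _ ⟨x, hx, rfl⟩
  rw [mem_closure_iff]
  intro W hW hxW
  have hUW : (U ∩ f ⁻¹' W).Nonempty := by
    rw [inter_comm]
    exact mem_closure_iff.1 hx _ (hW.preimage hcont) hxW
  obtain ⟨y, hy⟩ := hirr.kernImage_nonempty (hU.inter (hW.preimage hcont)) hUW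
  have hyW : y ∈ W :=
    image_preimage_subset f W <| image_mono inter_subset_right <| hsurj.kernImage_subset_image _ hy
  exact ⟨y, hyW, kernImage_mono inter_subset_left hy⟩

theorem regClosed_image (hirr : IsIrreducibleMap f) (hcont : Continuous f)
    (hclosed : IsClosedMap f) (hsurj : Function.Surjective f) {C : Set X} (hC : RegClosed C) :
    RegClosed (f '' C) := by
  rw [hC, hirr.image_closure_eq_closure_kernImage hcont hclosed hsurj isOpen_interior]
  exact (isClosedMap_iff_kernImage.1 hclosed isOpen_interior).regClosed_closure

end IsIrreducibleMap

end

theorem stmt14_general {X Y : Type*} [TopologicalSpace X] [TopologicalSpace Y]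
    (f : X → Y) (hcont : Continuous f) (hclosed : IsClosedMap f)
    (hsurj : Function.Surjective f)
    (hirr : ∀ F : Set X, IsClosed F → f '' F = Set.univ → F = Set.univ) :
    ∀ U : Set X, IsOpen U →
      (f '' closure U = closure {y : Y | f ⁻¹' {y} ⊆ U}) ∧
      ({y : Y | f ⁻¹' {y} ⊆ U} = (f '' Uᶜ)ᶜ) ∧
      (∀ C : Set X, RegClosed C → RegClosed (f '' C)) ∧
      (U.Nonempty → IsOpen {y : Y | f ⁻¹' {y} ⊆ U} ∧ {y : Y | f ⁻¹' {y} ⊆ U}.Nonempty) := by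
  have hirr : IsIrreducibleMap f := hirr
  intro U hU
  change f '' closure U = closure (kernImage f U) ∧ kernImage f U = (f '' Uᶜ)ᶜ ∧ _ ∧
    (U.Nonempty → IsOpen (kernImage f U) ∧ (kernImage f U).Nonempty)
  exact ⟨hirr.image_closure_eq_closure_kernImage hcont hclosed hsurj hU, kernImage_eq_compl,
    fun _ ↦ hirr.regClosed_image hcont hclosed hsurj,
    fun hne ↦ ⟨isClosedMap_iff_kernImage.1 hclosed hU, hirr.kernImage_nonempty hU hne⟩⟩

theorem stmt14 {X Y : Type*} [TopologicalSpace X] [TopologicalSpace Y]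
    (f : X → Y) (hcont : Continuous f) (hclosed : IsClosedMap f)
    (hfib : ∀ y : Y, IsCompact (f ⁻¹' {y})) (hsurj : Function.Surjective f)
    (hirr : ∀ F : Set X, IsClosed F → f '' F = Set.univ → F = Set.univ) :
    ∀ U : Set X, IsOpen U →
      (f '' closure U = closure {y : Y | f ⁻¹' {y} ⊆ U}) ∧
      ({y : Y | f ⁻¹' {y} ⊆ U} = (f '' Uᶜ)ᶜ) ∧
      (∀ C : Set X, RegClosed C → RegClosed (f '' C)) ∧
      (U.Nonempty → IsOpen {y : Y | f ⁻¹' {y} ⊆ U} ∧ {y : Y | f ⁻¹' {y} ⊆ U}.Nonempty) :=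
  stmt14_general f hcont hclosed hsurj hirr
end
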